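/- arXiv:2408.10447 — 2 statements merged into one kernel-verified Lean document; each statement's English description precedes it below -/
import Mathlib

section
/- Let 0 < ω < 1 be real and let κ̄ ∈ (1,e) be the solution of κ(1 − log κ) = ω in (1,e). For every real x ≥ e, setting m̄ = ⌊κ̄·log x⌋ and ᾱ = κ̄·log(x) − m̄, and for α equal to either ᾱ or 1, one has 0 ≤ li_{ω̄,α}(x) − li_*(x) ≤ S̄ · x^(1−ω) · √(log x), where S̄ = √(2π/κ̄)·(κ̄ + 1)·e^(13/12). -/
/-- The Stieltjes asymptotic approximation of `li(x)`:
`li_*(x) = (x/log x)·Σ_{k=0}^{n−1} k!/(log x)^k + (log x − n)·x·n!/(log x)^(n+1)`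
with `n = ⌊log x⌋`. -/
noncomputable def liStar (x : ℝ) : ℝ :=
  x / Real.log x *
      ∑ k ∈ Finset.range ⌊Real.log x⌋₊, (Nat.factorial k : ℝ) / Real.log x ^ k
    + (Real.log x - ⌊Real.log x⌋₊) * x * (Nat.factorial ⌊Real.log x⌋₊ : ℝ)
      / Real.log x ^ (⌊Real.log x⌋₊ + 1)

/-- The truncated asymptotic approximation of `li(x)` with truncation parameter `κ`
and fractional coefficient `α`:
`li_{κ,α}(x) = (x/log x)·(α·m!/(log x)^m + Σ_{k=0}^{m−1} k!/(log x)^k)` with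
`m = ⌊κ·log x⌋`. -/
noncomputable def liApprox (κ α x : ℝ) : ℝ :=
  x / Real.log x *
    (α * (Nat.factorial ⌊κ * Real.log x⌋₊ : ℝ) / Real.log x ^ ⌊κ * Real.log x⌋₊
      + ∑ k ∈ Finset.range ⌊κ * Real.log x⌋₊, (Nat.factorial k : ℝ) / Real.log x ^ k)

/-!
Write `L = log x`, `n = ⌊L⌋` and `m = ⌊κ L⌋`. The difference is `(x / L) G` with
`G = α m!/L^m + ∑_{n ≤ k < m} k!/L^k - (L - n) n!/L^n`. Since `k + 1 > L` for `k ≥ n`, the terms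
`k!/L^k` increase from `k = n` on, so `0 ≤ G ≤ (m + 1 - n) m!/L^m`. Stirling's bound
`m! ≤ e √m (m/e)^m` and the monotonicity of `t ↦ t log (t/L) - t` on `[L, ∞)` give
`m!/L^m ≤ e √(κ L) e^{-ω L}` when `m ≥ L`, since `κ L log (κ L / L) - κ L = -ω L`; otherwise `m = n`
and a cruder estimate suffices. The numerical constant is controlled by `e^{11/6} ≤ 2π`.
-/

open Real Finset
open scoped Nat

theorem factorial_le_exp_one_mul_sqrt_mul_pow {m : ℕ} (hm : m ≠ 0) :
    (m ! : ℝ) ≤ exp 1 * √m * (m / exp 1) ^ m := by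
  have hseq : Stirling.stirlingSeq m ≤ exp 1 / √2 := by
    rw [← Stirling.stirlingSeq_one]
    simpa [Nat.sub_add_cancel (Nat.one_le_iff_ne_zero.2 hm)] using
      Stirling.stirlingSeq'_antitone (Nat.zero_le (m - 1))
  rw [Stirling.stirlingSeq, div_le_iff₀ (by positivity)] at hseq
  calc (m ! : ℝ) ≤ exp 1 / √2 * (√(2 * m) * (m / exp 1) ^ m) := hseq
    _ = exp 1 * √m * (m / exp 1) ^ m := by
      rw [sqrt_mul zero_le_two]
      field_simp

theorem mul_log_div_sub_self_le {c a b : ℝ} (hc : 0 < c) (hca : c ≤ a) (hab : a ≤ b) :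
    a * log (a / c) - a ≤ b * log (b / c) - b := by
  have ha : 0 < a := hc.trans_le hca
  have hb : 0 < b := ha.trans_le hab
  have hsplit : log (b / c) = log (b / a) + log (a / c) := by
    rw [← log_mul (by positivity) (by positivity), div_mul_div_cancel₀ ha.ne']
  have hba : b - a ≤ b * log (b / a) := by
    have := one_sub_inv_le_log_of_pos (div_pos hb ha)
    rw [inv_div] at this
    calc b - a = b * (1 - a / b) := by field_simp
      _ ≤ b * log (b / a) := by gcongr
  have hac : 0 ≤ log (a / c) := log_nonneg ((one_le_div hc).2 hca)
  rw [hsplit]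
  nlinarith [mul_nonneg (sub_nonneg.2 hab) hac]

theorem div_exp_one_mul_pow_le_exp {L κ : ℝ} {m : ℕ} (hL : 0 < L) (hLm : L ≤ m)
    (hmκ : m ≤ κ * L) : ((m : ℝ) / (exp 1 * L)) ^ m ≤ exp (-(κ * (1 - log κ) * L)) := by
  have hm : (0 : ℝ) < m := hL.trans_le hLm
  rw [← exp_log (by positivity : (0 : ℝ) < m / (exp 1 * L)), ← exp_nat_mul, exp_le_exp,
    div_mul_eq_div_div_swap, log_div (by positivity) (exp_ne_zero 1), log_exp]
  have hmono := mul_log_div_sub_self_le hL hLm hmκ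
  rw [mul_div_cancel_right₀ κ hL.ne'] at hmono
  linarith

theorem div_exp_one_mul_pow_le_exp_neg {L : ℝ} {n : ℕ} (hL : 0 < L) (hn : n ≤ L) :
    ((n : ℝ) / (exp 1 * L)) ^ n ≤ exp (-n) := by
  have hsplit : (n : ℝ) / (exp 1 * L) = n / L * exp (-1) := by
    rw [exp_neg]; field_simp
  rw [hsplit, mul_pow, ← exp_nat_mul, mul_neg_one]
  exact mul_le_of_le_one_left (exp_pos _).le
    (pow_le_one₀ (by positivity) (div_le_one_of_le₀ hn hL.le))

noncomputable def stieltjesTerm (L : ℝ) (k : ℕ) : ℝ := k ! / L ^ k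

theorem stieltjesTerm_nonneg {L : ℝ} (hL : 0 ≤ L) (k : ℕ) : 0 ≤ stieltjesTerm L k := by
  unfold stieltjesTerm; positivity

theorem stieltjesTerm_le_succ {L : ℝ} {k : ℕ} (hL : 0 < L) (hk : L ≤ k + 1) :
    stieltjesTerm L k ≤ stieltjesTerm L (k + 1) := by
  unfold stieltjesTerm
  rw [div_le_div_iff₀ (by positivity) (by positivity), Nat.factorial_succ, pow_succ]
  push_cast
  calc (k ! : ℝ) * (L ^ k * L) = k ! * L ^ k * L := by ring
    _ ≤ k ! * L ^ k * (k + 1) := by gcongr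
    _ = (k + 1) * k ! * L ^ k := by ring

theorem stieltjesTerm_monotoneOn {L : ℝ} {n : ℕ} (hL : 0 < L) (hLn : L ≤ n + 1) :
    MonotoneOn (stieltjesTerm L) {k | n ≤ k} :=
  monotoneOn_nat_Ici_of_le_succ fun k hk ↦
    stieltjesTerm_le_succ hL (hLn.trans (by exact_mod_cast Nat.succ_le_succ hk))

theorem stieltjesTerm_le_exp_one_mul_sqrt {L : ℝ} {m : ℕ} (hL : 0 < L) (hm : m ≠ 0) :
    stieltjesTerm L m ≤ exp 1 * √m * ((m : ℝ) / (exp 1 * L)) ^ m := by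
  rw [stieltjesTerm, div_le_iff₀ (by positivity), mul_assoc, ← mul_pow,
    div_mul_eq_div_div, div_mul_cancel₀ _ hL.ne']
  exact factorial_le_exp_one_mul_sqrt_mul_pow hm

noncomputable def stieltjesGap (L α : ℝ) (n m : ℕ) : ℝ :=
  α * stieltjesTerm L m + ∑ k ∈ Ico n m, stieltjesTerm L k - (L - n) * stieltjesTerm L n

theorem liApprox_sub_liStar {κ α x : ℝ} (hx : log x ≠ 0)
    (hnm : ⌊log x⌋₊ ≤ ⌊κ * log x⌋₊) :
    liApprox κ α x - liStar x
      = x / log x * stieltjesGap (log x) α ⌊log x⌋₊ ⌊κ * log x⌋₊ := by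
  simp only [liApprox, liStar, stieltjesGap, stieltjesTerm,
    ← sum_range_add_sum_Ico _ hnm, pow_succ]
  field_simp
  ring

theorem stieltjesGap_nonneg {L α : ℝ} {n m : ℕ} (hL : 0 < L) (hLn : L ≤ n + 1)
    (hα : 0 ≤ α) (hnm : n ≤ m) (hm : m = n → L - n ≤ α) : 0 ≤ stieltjesGap L α n m := by
  have htn := stieltjesTerm_nonneg hL.le n
  rcases hnm.eq_or_lt with rfl | hlt
  · rw [stieltjesGap, Ico_self, sum_empty, add_zero, ← sub_mul]
    exact mul_nonneg (sub_nonneg.2 (hm rfl)) htn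
  · have hsingle : stieltjesTerm L n ≤ ∑ k ∈ Ico n m, stieltjesTerm L k :=
      single_le_sum (fun k _ ↦ stieltjesTerm_nonneg hL.le k) (mem_Ico.2 ⟨le_rfl, hlt⟩)
    have hα' := mul_nonneg hα (stieltjesTerm_nonneg hL.le m)
    rw [stieltjesGap]
    nlinarith

theorem stieltjesGap_le {L α : ℝ} {n m : ℕ} (hL : 0 < L) (hn : n ≤ L) (hLn : L ≤ n + 1)
    (hα : α ≤ 1) (hnm : n ≤ m) :
    stieltjesGap L α n m ≤ (m + 1 - n) * stieltjesTerm L m := by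
  have hsum : ∑ k ∈ Ico n m, stieltjesTerm L k ≤ (m - n) * stieltjesTerm L m := by
    have := sum_le_card_nsmul (Ico n m) (stieltjesTerm L) (stieltjesTerm L m) fun k hk ↦
      stieltjesTerm_monotoneOn hL hLn (mem_Ico.1 hk).1 hnm (mem_Ico.1 hk).2.le
    rwa [Nat.card_Ico, nsmul_eq_mul, Nat.cast_sub hnm] at this
  have htm := stieltjesTerm_nonneg hL.le m
  have htn := stieltjesTerm_nonneg hL.le n
  rw [stieltjesGap]
  nlinarith

section FloorGap

variable {L κ α : ℝ}

theorem stieltjesGap_floor_le_of_le_floor (hL : 1 ≤ L) (hκ : 0 < κ) (hα : α ≤ 1)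
    (hLm : L ≤ ⌊κ * L⌋₊) :
    stieltjesGap L α ⌊L⌋₊ ⌊κ * L⌋₊
      ≤ exp 1 * √κ * (κ + 1) * (L * √L * exp (-(κ * (1 - log κ) * L))) := by
  set n := ⌊L⌋₊
  set m := ⌊κ * L⌋₊
  have hL0 : 0 < L := one_pos.trans_le hL
  have hnL : (n : ℝ) ≤ L := Nat.floor_le hL0.le
  have hLn : L ≤ n + 1 := (Nat.lt_floor_add_one L).le
  have hmκ : (m : ℝ) ≤ κ * L := Nat.floor_le (by positivity)
  have hnm : n ≤ m := by exact_mod_cast hnL.trans hLm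
  have hm : m ≠ 0 := by rintro hm; rw [hm, Nat.cast_zero] at hLm; linarith
  have hcount : (m + 1 - n : ℝ) ≤ (κ + 1) * L := by linarith
  have hterm : stieltjesTerm L m ≤ exp 1 * (√κ * √L) * exp (-(κ * (1 - log κ) * L)) :=
    calc stieltjesTerm L m ≤ exp 1 * √m * ((m : ℝ) / (exp 1 * L)) ^ m :=
          stieltjesTerm_le_exp_one_mul_sqrt hL0 hm
      _ ≤ exp 1 * (√κ * √L) * exp (-(κ * (1 - log κ) * L)) := by
          rw [← sqrt_mul hκ.le]
          gcongr
          exact div_exp_one_mul_pow_le_exp hL0 hLm hmκ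
  calc stieltjesGap L α n m ≤ (m + 1 - n) * stieltjesTerm L m :=
        stieltjesGap_le hL0 hnL hLn hα hnm
    _ ≤ (κ + 1) * L * (exp 1 * (√κ * √L) * exp (-(κ * (1 - log κ) * L))) := by
        gcongr
        exact stieltjesTerm_nonneg hL0.le m
    _ = _ := by ring

theorem stieltjesGap_floor_le_of_floor_lt {ω : ℝ} (hL : 1 ≤ L) (hκ : 1 ≤ κ) (hω : ω ≤ 1)
    (hα : α ≤ 1) (hmL : ⌊κ * L⌋₊ < L) :
    stieltjesGap L α ⌊L⌋₊ ⌊κ * L⌋₊ ≤ exp 1 * exp 1 * (√L * exp (-(ω * L))) := by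
  set n := ⌊L⌋₊
  have hL0 : 0 < L := one_pos.trans_le hL
  have hnL : (n : ℝ) ≤ L := Nat.floor_le hL0.le
  have hLn : L < n + 1 := Nat.lt_floor_add_one L
  have hmn : ⌊κ * L⌋₊ = n :=
    le_antisymm (Nat.le_floor hmL.le) (Nat.floor_le_floor (by nlinarith))
  have hn : n ≠ 0 := by rintro hn; rw [hn, Nat.cast_zero, zero_add] at hLn; linarith
  rw [hmn]
  calc stieltjesGap L α n n ≤ (n + 1 - n) * stieltjesTerm L n :=
        stieltjesGap_le hL0 hnL hLn.le hα le_rfl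
    _ = stieltjesTerm L n := by ring
    _ ≤ exp 1 * √n * ((n : ℝ) / (exp 1 * L)) ^ n :=
        stieltjesTerm_le_exp_one_mul_sqrt hL0 hn
    _ ≤ exp 1 * √L * exp (1 + -(ω * L)) := by
        gcongr
        refine (div_exp_one_mul_pow_le_exp_neg hL0 hnL).trans (exp_le_exp.2 ?_)
        nlinarith
    _ = exp 1 * exp 1 * (√L * exp (-(ω * L))) := by rw [exp_add]; ring

end FloorGap

theorem exp_eleven_sixths_le_two_pi : exp (11 / 6) ≤ 2 * π := by
  rw [← pow_le_pow_iff_left₀ (exp_pos _).le (by positivity) (by norm_num : 6 ≠ 0),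
    ← exp_nat_mul, show ((6 : ℕ) : ℝ) * (11 / 6) = (11 : ℕ) * 1 by norm_num, exp_nat_mul]
  calc exp 1 ^ 11 ≤ 2.7182818286 ^ 11 := by gcongr; exact exp_one_lt_d9.le
    _ ≤ (2 * 3.141592) ^ 6 := by norm_num
    _ ≤ (2 * π) ^ 6 := by gcongr; exact pi_gt_d6.le

theorem exp_one_sq_sq_eq : exp 1 ^ 2 * exp 1 ^ 2 = exp (11 / 6) * exp (13 / 12) ^ 2 := by
  simp only [sq, ← exp_add]; norm_num

theorem exp_one_mul_sqrt_mul_le {κ : ℝ} (hκ : 0 < κ) (hκe : κ ≤ exp 1) :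
    exp 1 * √κ * (κ + 1) ≤ √(2 * π / κ) * (κ + 1) * exp (13 / 12) := by
  rw [mul_right_comm _ (κ + 1)]
  refine mul_le_mul_of_nonneg_right ?_ (by linarith)
  rw [← pow_le_pow_iff_left₀ (by positivity) (by positivity) two_ne_zero, mul_pow, mul_pow,
    sq_sqrt hκ.le, sq_sqrt (by positivity), div_mul_eq_mul_div, le_div_iff₀ hκ]
  calc exp 1 ^ 2 * κ * κ ≤ exp 1 ^ 2 * exp 1 ^ 2 := by
        rw [mul_assoc, ← sq]; gcongr
    _ ≤ 2 * π * exp (13 / 12) ^ 2 := by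
        rw [exp_one_sq_sq_eq]; gcongr; exact exp_eleven_sixths_le_two_pi

theorem exp_one_mul_exp_one_le {κ : ℝ} (hκ : 0 < κ) :
    exp 1 * exp 1 ≤ √(2 * π / κ) * (κ + 1) * exp (13 / 12) := by
  rw [← pow_le_pow_iff_left₀ (by positivity) (by positivity) two_ne_zero, mul_pow, mul_pow,
    mul_pow, sq_sqrt (by positivity), exp_one_sq_sq_eq]
  have hκ' : 2 * π ≤ 2 * π / κ * (κ + 1) ^ 2 := by
    rw [div_mul_eq_mul_div, le_div_iff₀ hκ]
    gcongr
    nlinarith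
  gcongr
  exact exp_eleven_sixths_le_two_pi.trans hκ'

theorem stieltjesGap_floor_le {L κ ω α : ℝ} (hL : 1 ≤ L) (hκ1 : 1 < κ) (hκe : κ < exp 1)
    (hω : ω ≤ 1) (hsol : κ * (1 - log κ) = ω) (hα : α ≤ 1) :
    stieltjesGap L α ⌊L⌋₊ ⌊κ * L⌋₊
      ≤ √(2 * π / κ) * (κ + 1) * exp (13 / 12) * (L * √L * exp (-(ω * L))) := by
  have hκ0 : 0 < κ := one_pos.trans hκ1
  rcases lt_or_ge (⌊κ * L⌋₊ : ℝ) L with hmL | hLm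
  · refine (stieltjesGap_floor_le_of_floor_lt hL hκ1.le hω hα hmL).trans ?_
    exact mul_le_mul (exp_one_mul_exp_one_le hκ0)
      (mul_le_mul_of_nonneg_right (le_mul_of_one_le_left (sqrt_nonneg L) hL) (exp_pos _).le)
      (by positivity) (by positivity)
  · refine (hsol ▸ stieltjesGap_floor_le_of_le_floor hL hκ0 hα hLm).trans ?_
    exact mul_le_mul_of_nonneg_right (exp_one_mul_sqrt_mul_le hκ0 hκe.le) (by positivity)

theorem liApprox_upper_sub_liStar_le_S_general (ω κ : ℝ) (hω1 : ω < 1)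
    (hκ1 : 1 < κ) (hκe : κ < Real.exp 1) (hsol : κ * (1 - Real.log κ) = ω)
    (x : ℝ) (hx : Real.exp 1 ≤ x) (α : ℝ)
    (hα : α = κ * Real.log x - ⌊κ * Real.log x⌋₊ ∨ α = 1) :
    0 ≤ liApprox κ α x - liStar x ∧
      liApprox κ α x - liStar x ≤
        Real.sqrt (2 * Real.pi / κ) * (κ + 1) * Real.exp (13 / 12) * x ^ (1 - ω)
          * Real.sqrt (Real.log x) := by
  have hx0 : 0 < x := (exp_pos 1).trans_le hx
  have hL : 1 ≤ log x := (le_log_iff_exp_le hx0).2 hx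
  have hL0 : 0 < log x := one_pos.trans_le hL
  have hfrac := Nat.lt_floor_add_one (κ * log x)
  have hα0 : 0 ≤ α := by
    rcases hα with rfl | rfl
    · linarith [Nat.floor_le (by positivity : 0 ≤ κ * log x)]
    · exact zero_le_one
  have hα1 : α ≤ 1 := by rcases hα with rfl | rfl <;> linarith
  have hnm : ⌊log x⌋₊ ≤ ⌊κ * log x⌋₊ := Nat.floor_le_floor (by nlinarith)
  rw [liApprox_sub_liStar hL0.ne' hnm]
  constructor
  · refine mul_nonneg (by positivity)
      (stieltjesGap_nonneg hL0 (Nat.lt_floor_add_one _).le hα0 hnm fun hmn ↦ ?_)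
    rcases hα with rfl | rfl
    · rw [← hmn]; nlinarith
    · linarith [Nat.lt_floor_add_one (log x)]
  · have hxpow : x * exp (-(ω * log x)) = x ^ (1 - ω) := by
      rw [rpow_sub hx0, rpow_one, rpow_def_of_pos hx0, exp_neg, mul_comm ω, div_eq_mul_inv]
    calc x / log x * stieltjesGap (log x) α ⌊log x⌋₊ ⌊κ * log x⌋₊
        ≤ x / log x * (√(2 * π / κ) * (κ + 1) * exp (13 / 12)
            * (log x * √(log x) * exp (-(ω * log x)))) := by
          gcongr
          exact stieltjesGap_floor_le hL hκ1 hκe hω1.le hsol hα1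
      _ = √(2 * π / κ) * (κ + 1) * exp (13 / 12) * (x * exp (-(ω * log x))) * √(log x) := by
          field_simp
      _ = _ := by rw [hxpow]

/-- For `0 < ω < 1`, `κ̄ ∈ (1,e)` the solution of `κ(1−log κ) = ω`,
every real `x ≥ e`, `m̄ = ⌊κ̄·log x⌋`, `ᾱ = κ̄·log x − m̄`, and `α ∈ {ᾱ, 1}`, one has
`0 ≤ li_{ω̄,α}(x) − li_*(x) ≤ S̄·x^(1−ω)·√(log x)` with `S̄ = √(2π/κ̄)·(κ̄+1)·e^(13/12)`. -/
theorem liApprox_upper_sub_liStar_le_S (ω κ : ℝ) (hω0 : 0 < ω) (hω1 : ω < 1)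
    (hκ1 : 1 < κ) (hκe : κ < Real.exp 1) (hsol : κ * (1 - Real.log κ) = ω)
    (x : ℝ) (hx : Real.exp 1 ≤ x) (α : ℝ)
    (hα : α = κ * Real.log x - ⌊κ * Real.log x⌋₊ ∨ α = 1) :
    0 ≤ liApprox κ α x - liStar x ∧
      liApprox κ α x - liStar x ≤
        Real.sqrt (2 * Real.pi / κ) * (κ + 1) * Real.exp (13 / 12) * x ^ (1 - ω)
          * Real.sqrt (Real.log x) :=
  liApprox_upper_sub_liStar_le_S_general ω κ hω1 hκ1 hκe hsol x hx α hα
end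

section
/- Assume that |li(x) − li_*(x)| ≤ 1.265692883423 for all real x ≥ e, and assume that li_0(x) ≤ π(x) ≤ li_1(x) for all real x ≥ e. Then |li(x) − π(x)| ≤ D̲·√(x/log x) + 1.265692883423 for all real x ≥ e, where D̲ = √(8π/κ̲)·e^(13/12)·(1 + κ̲)/(1 − κ̲); in particular |li(x) − π(x)| = O(√(x/log x)). -/
/-- The logarithmic integral `li(x)`, the Cauchy principal value of `∫₀ˣ dt/log t`. -/
noncomputable def li (x : ℝ) : ℝ :=
  Filter.limUnder (nhdsWithin (0 : ℝ) (Set.Ioi 0)) fun ε =>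
    (∫ t in (0 : ℝ)..(1 - ε), 1 / Real.log t) + ∫ t in (1 + ε)..x, 1 / Real.log t

/-!
Write `L = log x` and `T k = k! / L ^ k`. The Stieltjes approximation `li_*` and both bounds
`li_0 ≤ π ≤ li_1` are `x / L` times partial sums of `T` (`li_*` interpolating between the cut-offs
`⌊L⌋` and `⌊L⌋ + 1`), so `|li_* x - π x|` is at most `x / L` times the sum of `T k` over
`⌊κ̲ L⌋ ≤ k ≤ ⌊κ̄ L⌋`. By Stirling, `T k ≤ e √k exp (-L φ (k / L))` with `φ t = t (1 - log t)`.
Since `φ` is concave with `φ κ̲ = φ κ̄ = 1 / 2` and `φ 1 = 1`, on this range `L φ (k / L)` exceeds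
`L / 2` by an amount growing linearly in the distance of `k` from the ends `κ̲ L` and `κ̄ L`, so the
sum is bounded by geometric series and is `O(√L e^{-L/2})`. As `e^{-L/2} = 1 / √x`, this is
`O(√(x / L))` after multiplication by `x / L`, with a constant below `D̲`.
-/

open Real Finset
open scoped Nat

noncomputable def stirlingRate (t : ℝ) : ℝ := t * (1 - log t)

lemma stirlingRate_one : stirlingRate 1 = 1 := by simp [stirlingRate]

lemma concaveOn_stirlingRate : ConcaveOn ℝ (Set.Ici 0) stirlingRate := by
  have h : stirlingRate = (fun t => t) - fun t => t * log t := by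
    funext t; simp only [stirlingRate, Pi.sub_apply]; ring
  exact h ▸ (concaveOn_id (convex_Ici 0)).sub convexOn_mul_log

lemma ConcaveOn.chord_le {s : Set ℝ} {f : ℝ → ℝ} (hf : ConcaveOn ℝ s f) {a b t : ℝ}
    (ha : a ∈ s) (hb : b ∈ s) (hat : a ≤ t) (htb : t ≤ b) :
    (b - t) * f a + (t - a) * f b ≤ (b - a) * f t := by
  rcases hat.eq_or_lt with rfl | hat'
  · simp
  have hab : 0 < b - a := by linarith
  have h := hf.2 ha hb (div_nonneg (sub_nonneg.2 htb) hab.le) (div_nonneg (sub_nonneg.2 hat) hab.le)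
    (by rw [← add_div, div_eq_one_iff_eq hab.ne']; ring)
  have ht : (b - t) / (b - a) * a + (t - a) / (b - a) * b = t := by
    field_simp; ring
  simp only [smul_eq_mul, ht] at h
  calc (b - t) * f a + (t - a) * f b
      = (b - a) * ((b - t) / (b - a) * f a + (t - a) / (b - a) * f b) := by field_simp
    _ ≤ (b - a) * f t := mul_le_mul_of_nonneg_left h hab.le

lemma half_add_le_stirlingRate_of_le_one {a t : ℝ} (ha : 0 ≤ a) (ha1 : a < 1)
    (hφa : 1 / 2 ≤ stirlingRate a) (hat : a ≤ t) (ht1 : t ≤ 1) :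
    1 / 2 + (t - a) / (2 * (1 - a)) ≤ stirlingRate t := by
  have h := concaveOn_stirlingRate.chord_le ha (show (1 : ℝ) ∈ Set.Ici 0 by simp) hat ht1
  rw [stirlingRate_one] at h
  rw [div_add_div _ _ two_ne_zero (by linarith), div_le_iff₀ (by linarith)]
  nlinarith

lemma half_add_le_stirlingRate_of_one_le {b t : ℝ} (hb : 1 < b)
    (hφb : 1 / 2 ≤ stirlingRate b) (ht1 : 1 ≤ t) (htb : t ≤ b) :
    1 / 2 + (b - t) / (2 * (b - 1)) ≤ stirlingRate t := by
  have h := concaveOn_stirlingRate.chord_le (show (1 : ℝ) ∈ Set.Ici 0 by simp)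
    (show b ∈ Set.Ici 0 by simp only [Set.mem_Ici]; linarith) ht1 htb
  rw [stirlingRate_one] at h
  rw [div_add_div _ _ two_ne_zero (by linarith), div_le_iff₀ (by linarith)]
  nlinarith

/-- `stirlingSeq` is antitone, so `k! / (√(2k) (k / e) ^ k) ≤ stirlingSeq 1 = e / √2`. -/
lemma factorial_le_exp_one_mul_sqrt {k : ℕ} (hk : k ≠ 0) :
    (k ! : ℝ) ≤ exp 1 * √k * (k / exp 1) ^ k := by
  have hseq : Stirling.stirlingSeq k ≤ exp 1 / √2 := by
    obtain ⟨j, rfl⟩ := Nat.exists_eq_succ_of_ne_zero hk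
    exact Stirling.stirlingSeq_one ▸ Stirling.stirlingSeq'_antitone (Nat.zero_le j)
  calc (k ! : ℝ) = Stirling.stirlingSeq k * (√2 * √k * (k / exp 1) ^ k) := by
        rw [Stirling.stirlingSeq, ← sqrt_mul zero_le_two]; field_simp
    _ ≤ exp 1 / √2 * (√2 * √k * (k / exp 1) ^ k) := by gcongr
    _ = exp 1 * √k * (k / exp 1) ^ k := by field_simp

lemma factorial_div_pow_le {L : ℝ} (hL : 0 < L) {k : ℕ} (hk : k ≠ 0) :
    (k ! : ℝ) / L ^ k ≤ exp 1 * √k * exp (-(L * stirlingRate (k / L))) := by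
  have hk0 : (0 : ℝ) < k := by positivity
  have hexp : exp (-(L * stirlingRate (k / L))) = ((k : ℝ) / exp 1) ^ k / L ^ k := by
    rw [stirlingRate, ← div_pow, ← exp_log (show 0 < (k : ℝ) / exp 1 / L by positivity),
      ← exp_nat_mul]
    congr 1
    rw [log_div hk0.ne' hL.ne', log_div (by positivity : (k : ℝ) / exp 1 ≠ 0) hL.ne',
      log_div hk0.ne' (exp_pos 1).ne', log_exp]
    field_simp
    ring
  rw [hexp, ← mul_div_assoc]
  exact div_le_div_of_nonneg_right (factorial_le_exp_one_mul_sqrt hk) (by positivity)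

lemma factorial_div_pow_le_of_le_self {a L : ℝ} (ha : 0 ≤ a) (ha1 : a < 1)
    (hφa : 1 / 2 ≤ stirlingRate a) (hL : 0 < L) {k : ℕ} (hk : k ≠ 0) (hak : a * L ≤ k)
    (hkL : (k : ℝ) ≤ L) :
    (k ! : ℝ) / L ^ k
      ≤ exp 1 * √L * exp (-(L / 2)) * exp (-((k - a * L) / (2 * (1 - a)))) := by
  have hrate := half_add_le_stirlingRate_of_le_one ha ha1 hφa
    ((le_div_iff₀ hL).2 hak) ((div_le_one hL).2 hkL)
  have hexp : L / 2 + (k - a * L) / (2 * (1 - a)) ≤ L * stirlingRate (k / L) :=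
    calc L / 2 + (k - a * L) / (2 * (1 - a)) = L * (1 / 2 + (k / L - a) / (2 * (1 - a))) := by
          field_simp
      _ ≤ L * stirlingRate (k / L) := mul_le_mul_of_nonneg_left hrate hL.le
  calc (k ! : ℝ) / L ^ k ≤ exp 1 * √k * exp (-(L * stirlingRate (k / L))) :=
        factorial_div_pow_le hL hk
    _ ≤ exp 1 * √L * exp (-(L / 2 + (k - a * L) / (2 * (1 - a)))) := by gcongr
    _ = _ := by rw [neg_add, exp_add]; ring

lemma factorial_div_pow_le_of_self_le {b L : ℝ} (hb : 1 < b) (hφb : 1 / 2 ≤ stirlingRate b)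
    (hL : 0 < L) {k : ℕ} (hLk : L ≤ k) (hkb : (k : ℝ) ≤ b * L) :
    (k ! : ℝ) / L ^ k
      ≤ exp 1 * √(b * L) * exp (-(L / 2)) * exp (-((b * L - k) / (2 * (b - 1)))) := by
  have hk : k ≠ 0 := by rintro rfl; simp at hLk; linarith
  have hrate := half_add_le_stirlingRate_of_one_le hb hφb
    ((one_le_div hL).2 hLk) ((div_le_iff₀ hL).2 hkb)
  have hexp : L / 2 + (b * L - k) / (2 * (b - 1)) ≤ L * stirlingRate (k / L) :=
    calc L / 2 + (b * L - k) / (2 * (b - 1)) = L * (1 / 2 + (b - k / L) / (2 * (b - 1))) := by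
          field_simp
      _ ≤ L * stirlingRate (k / L) := mul_le_mul_of_nonneg_left hrate hL.le
  calc (k ! : ℝ) / L ^ k ≤ exp 1 * √k * exp (-(L * stirlingRate (k / L))) :=
        factorial_div_pow_le hL hk
    _ ≤ exp 1 * √(b * L) * exp (-(L / 2 + (b * L - k) / (2 * (b - 1)))) := by gcongr
    _ = _ := by rw [neg_add, exp_add]; ring

lemma sum_exp_neg_div_le {d : ℝ} (hd : 0 < d) {s : Finset ℕ} {e : ℕ → ℕ}
    (he : Set.InjOn e s) :
    ∑ k ∈ s, exp (-(e k / d)) ≤ 1 + d := by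
  have hr0 : 0 ≤ exp (-(1 / d)) := (exp_pos _).le
  have hr1 : exp (-(1 / d)) < 1 := exp_lt_one_iff.2 (by simp [hd])
  have hterm : ∀ k, exp (-(e k / d)) = exp (-(1 / d)) ^ e k := fun k => by
    rw [← exp_nat_mul]; ring_nf
  calc ∑ k ∈ s, exp (-(e k / d)) = ∑ j ∈ s.image e, exp (-(1 / d)) ^ j := by
        rw [sum_image he]; simp only [hterm]
    _ ≤ ∑' j : ℕ, exp (-(1 / d)) ^ j :=
        (summable_geometric_of_lt_one hr0 hr1).sum_le_tsum _ (fun _ _ => pow_nonneg hr0 _)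
    _ = (1 - exp (-(1 / d)))⁻¹ := tsum_geometric_of_lt_one hr0 hr1
    _ ≤ 1 + d := by
        have hu := add_one_le_exp (1 / d)
        have hu1 : 1 < exp (1 / d) := by linarith [one_div_pos.2 hd]
        rw [exp_neg, inv_le_iff_one_le_mul₀ (sub_pos.2 (inv_lt_one_of_one_lt₀ hu1))]
        field_simp
        rw [div_add_one hd.ne', div_le_iff₀ hd] at hu
        nlinarith

/-- The one index `⌊a * L⌋₊` below `a * L` is compared with its successor:
`T m = T (m + 1) * (L / (m + 1)) ≤ T (m + 1) / a` for `T k = k! / L ^ k`. -/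
lemma factorial_div_pow_floor_le {a L : ℝ} (ha : 0 < a) (ha2 : a ≤ 1 / 2)
    (hφa : 1 / 2 ≤ stirlingRate a) (hL : 1 ≤ L) :
    (⌊a * L⌋₊ ! : ℝ) / L ^ ⌊a * L⌋₊ ≤ a⁻¹ * (exp 1 * √L * exp (-(L / 2))) := by
  set m := ⌊a * L⌋₊
  have hL0 : 0 < L := by linarith
  have hm : a * L < m + 1 := Nat.lt_floor_add_one _
  have hmL : ((m + 1 : ℕ) : ℝ) ≤ L := by
    push_cast
    rcases Nat.eq_zero_or_pos m with h | h
    · simp [h, hL]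
    · have : (m : ℝ) ≤ a * L := Nat.floor_le (by positivity)
      have : (1 : ℝ) ≤ m := by exact_mod_cast h
      nlinarith
  have hstep : (m ! : ℝ) / L ^ m = ((m + 1) ! : ℝ) / L ^ (m + 1) * (L / (m + 1)) := by
    rw [Nat.factorial_succ, pow_succ]; push_cast; field_simp
  have hnext := factorial_div_pow_le_of_le_self ha.le (by linarith) hφa hL0 m.succ_ne_zero
    (by push_cast; exact hm.le) hmL
  have hdecay : exp (-((((m + 1 : ℕ) : ℝ) - a * L) / (2 * (1 - a)))) ≤ 1 := by
    rw [exp_le_one_iff, neg_nonpos]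
    push_cast
    exact div_nonneg (by linarith) (by linarith)
  have hratio : L / (m + 1) ≤ a⁻¹ := by
    rw [div_le_iff₀ (by positivity), ← div_eq_inv_mul, le_div_iff₀ ha, mul_comm]
    exact hm.le
  calc (m ! : ℝ) / L ^ m = ((m + 1) ! : ℝ) / L ^ (m + 1) * (L / (m + 1)) := hstep
    _ ≤ exp 1 * √L * exp (-(L / 2)) * 1 * a⁻¹ := by
        gcongr
        exact hnext.trans (mul_le_mul_of_nonneg_left hdecay (by positivity))
    _ = a⁻¹ * (exp 1 * √L * exp (-(L / 2))) := by ring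

lemma sum_Ioc_floor_factorial_div_pow_le_of_lt_one {a L : ℝ} (ha : 0 ≤ a) (ha1 : a < 1)
    (hφa : 1 / 2 ≤ stirlingRate a) (hL : 0 < L) :
    ∑ k ∈ Ioc ⌊a * L⌋₊ ⌊L⌋₊, (k ! : ℝ) / L ^ k
      ≤ exp 1 * √L * exp (-(L / 2)) * (1 + 2 * (1 - a)) := by
  set m := ⌊a * L⌋₊
  have hm : a * L < m + 1 := Nat.lt_floor_add_one _
  have hinj : Set.InjOn (fun k => k - (m + 1)) (Ioc m ⌊L⌋₊ : Set ℕ) := by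
    intro i hi j hj h
    simp only [coe_Ioc, Set.mem_Ioc] at hi hj
    simp only at h
    omega
  calc ∑ k ∈ Ioc m ⌊L⌋₊, (k ! : ℝ) / L ^ k
      ≤ ∑ k ∈ Ioc m ⌊L⌋₊, exp 1 * √L * exp (-(L / 2))
          * exp (-(((k - (m + 1) : ℕ) : ℝ) / (2 * (1 - a)))) := by
        refine sum_le_sum fun k hk => ?_
        obtain ⟨hmk, hkn⟩ := mem_Ioc.1 hk
        have hmk' : (m + 1 : ℝ) ≤ k := by exact_mod_cast hmk
        refine (factorial_div_pow_le_of_le_self ha ha1 hφa hL (by omega) (by linarith)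
          ((Nat.le_floor_iff hL.le).1 hkn)).trans ?_
        gcongr
        rw [Nat.cast_sub hmk]
        push_cast
        linarith
    _ = exp 1 * √L * exp (-(L / 2))
          * ∑ k ∈ Ioc m ⌊L⌋₊, exp (-(((k - (m + 1) : ℕ) : ℝ) / (2 * (1 - a)))) := by
        rw [mul_sum]
    _ ≤ exp 1 * √L * exp (-(L / 2)) * (1 + 2 * (1 - a)) := by
        gcongr
        exact sum_exp_neg_div_le (by linarith) hinj

lemma sum_Ioc_floor_factorial_div_pow_le_of_one_lt {b L : ℝ} (hb : 1 < b)
    (hφb : 1 / 2 ≤ stirlingRate b) (hL : 0 < L) :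
    ∑ k ∈ Ioc ⌊L⌋₊ ⌊b * L⌋₊, (k ! : ℝ) / L ^ k
      ≤ exp 1 * √(b * L) * exp (-(L / 2)) * (1 + 2 * (b - 1)) := by
  set m := ⌊b * L⌋₊
  have hn : L < ⌊L⌋₊ + 1 := Nat.lt_floor_add_one _
  have hinj : Set.InjOn (fun k => m - k) (Ioc ⌊L⌋₊ m : Set ℕ) := by
    intro i hi j hj h
    simp only [coe_Ioc, Set.mem_Ioc] at hi hj
    simp only at h
    omega
  calc ∑ k ∈ Ioc ⌊L⌋₊ m, (k ! : ℝ) / L ^ k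
      ≤ ∑ k ∈ Ioc ⌊L⌋₊ m, exp 1 * √(b * L) * exp (-(L / 2))
          * exp (-(((m - k : ℕ) : ℝ) / (2 * (b - 1)))) := by
        refine sum_le_sum fun k hk => ?_
        obtain ⟨hnk, hkm⟩ := mem_Ioc.1 hk
        have hnk' : ((⌊L⌋₊ + 1 : ℕ) : ℝ) ≤ k := by exact_mod_cast hnk
        have hkm' : (k : ℝ) ≤ b * L := (Nat.le_floor_iff (by positivity)).1 hkm
        refine (factorial_div_pow_le_of_self_le hb hφb hL (by push_cast at hnk'; linarith)
          hkm').trans ?_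
        gcongr
        rw [Nat.cast_sub hkm]
        linarith [Nat.floor_le (show 0 ≤ b * L by positivity)]
    _ = exp 1 * √(b * L) * exp (-(L / 2))
          * ∑ k ∈ Ioc ⌊L⌋₊ m, exp (-(((m - k : ℕ) : ℝ) / (2 * (b - 1)))) := by
        rw [mul_sum]
    _ ≤ exp 1 * √(b * L) * exp (-(L / 2)) * (1 + 2 * (b - 1)) := by
        gcongr
        exact sum_exp_neg_div_le (by linarith) hinj

theorem sum_Icc_floor_factorial_div_pow_le {a b L : ℝ} (ha : 0 < a) (ha2 : a ≤ 1 / 2)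
    (hφa : 1 / 2 ≤ stirlingRate a) (hb : 1 < b) (hφb : 1 / 2 ≤ stirlingRate b)
    (hL : 1 ≤ L) :
    ∑ k ∈ Icc ⌊a * L⌋₊ ⌊b * L⌋₊, (k ! : ℝ) / L ^ k
      ≤ exp 1 * (a⁻¹ + (1 + 2 * (1 - a)) + √b * (1 + 2 * (b - 1))) * √L
        * exp (-(L / 2)) := by
  have hL0 : 0 < L := by linarith
  have h₀ : ⌊a * L⌋₊ ≤ ⌊L⌋₊ := Nat.floor_le_floor (by nlinarith)
  have h₁ : ⌊L⌋₊ ≤ ⌊b * L⌋₊ := Nat.floor_le_floor (by nlinarith)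
  rw [← add_sum_Ioc_eq_sum_Icc (h₀.trans h₁), ← sum_Ioc_consecutive _ h₀ h₁]
  have hfirst := factorial_div_pow_floor_le ha ha2 hφa hL
  have hleft := sum_Ioc_floor_factorial_div_pow_le_of_lt_one ha.le (by linarith) hφa hL0
  have hright := sum_Ioc_floor_factorial_div_pow_le_of_one_lt hb hφb hL0
  rw [sqrt_mul (by linarith)] at hright
  linear_combination hfirst + hleft + hright

/-- Both `c * (∑ k ∈ range n, f k + θ * f n)` and `y` lie between `c` times the partial sums
of `f` up to `m₀` and up to `m₁ + 1`. -/
lemma abs_mul_sub_le_mul_sum_Icc {f : ℕ → ℝ} (hf : ∀ k, 0 ≤ f k) {m₀ n m₁ : ℕ}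
    (h₀ : m₀ ≤ n) (h₁ : n ≤ m₁) {c θ y : ℝ} (hc : 0 ≤ c) (hθ₀ : 0 ≤ θ) (hθ₁ : θ ≤ 1)
    (hlo : c * ∑ k ∈ range m₀, f k ≤ y)
    (hhi : y ≤ c * (f m₁ + ∑ k ∈ range m₁, f k)) :
    |c * (∑ k ∈ range n, f k + θ * f n) - y| ≤ c * ∑ k ∈ Icc m₀ m₁, f k := by
  have hmono : ∀ {i j : ℕ}, i ≤ j → ∑ k ∈ range i, f k ≤ ∑ k ∈ range j, f k :=
    fun h => sum_le_sum_of_subset_of_nonneg (range_subset_range.2 h) fun k _ _ => hf k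
  have hA : ∑ k ∈ range m₀, f k ≤ ∑ k ∈ range n, f k + θ * f n :=
    (hmono h₀).trans (le_add_of_nonneg_right (mul_nonneg hθ₀ (hf n)))
  have hB : ∑ k ∈ range n, f k + θ * f n ≤ f m₁ + ∑ k ∈ range m₁, f k := by
    have h := hmono (Nat.succ_le_succ h₁)
    rw [sum_range_succ, sum_range_succ] at h
    nlinarith [hf n]
  have hIcc :
      ∑ k ∈ Icc m₀ m₁, f k = f m₁ + ∑ k ∈ range m₁, f k - ∑ k ∈ range m₀, f k := by
    rw [← Ico_add_one_right_eq_Icc, sum_Ico_eq_sub _ (by omega), sum_range_succ, add_comm]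
  rw [hIcc, abs_sub_le_iff]
  constructor <;> nlinarith [mul_le_mul_of_nonneg_left hA hc, mul_le_mul_of_nonneg_left hB hc]

lemma liStar_eq {x : ℝ} (hx : log x ≠ 0) :
    liStar x = x / log x * (∑ k ∈ range ⌊log x⌋₊, (k ! : ℝ) / log x ^ k
      + (log x - ⌊log x⌋₊) * ((⌊log x⌋₊ ! : ℝ) / log x ^ ⌊log x⌋₊)) := by
  rw [liStar, pow_succ]
  field_simp

lemma div_log_mul_sqrt_log_mul_exp {x : ℝ} (hx : 1 < x) :
    x / log x * (√(log x) * exp (-(log x / 2))) = √(x / log x) := by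
  have hx0 : 0 < x := by linarith
  have hL : 0 < log x := log_pos hx
  have hsx : exp (log x / 2) = √x := by
    rw [sqrt_eq_rpow, rpow_def_of_pos hx0]; ring_nf
  rw [exp_neg, hsx, sqrt_div' _ hL.le]
  have : √x ≠ 0 := (sqrt_pos.2 hx0).ne'
  field_simp
  rw [sq_sqrt hL.le, sq_sqrt hx0.le, mul_comm]

lemma abs_liStar_sub_le_sum_Icc {a b x y : ℝ} (ha1 : a ≤ 1) (hb : 1 ≤ b)
    (hx : exp 1 ≤ x) (hlo : liApprox a 0 x ≤ y) (hhi : y ≤ liApprox b 1 x) :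
    |liStar x - y|
      ≤ x / log x * ∑ k ∈ Icc ⌊a * log x⌋₊ ⌊b * log x⌋₊, (k ! : ℝ) / log x ^ k := by
  have hx0 : 0 < x := (exp_pos 1).trans_le hx
  have hL : 1 ≤ log x := (le_log_iff_exp_le hx0).2 hx
  rw [liStar_eq (by linarith)]
  refine abs_mul_sub_le_mul_sum_Icc (fun k => by positivity) (Nat.floor_le_floor (by nlinarith))
    (Nat.floor_le_floor (by nlinarith)) (by positivity) (sub_nonneg.2 (Nat.floor_le (by linarith)))
    (by linarith [Nat.lt_floor_add_one (log x)]) ?_ ?_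
  · simpa [liApprox] using hlo
  · simpa [liApprox] using hhi

lemma abs_liStar_sub_le_mul_sqrt {a b x y : ℝ} (ha : 0 < a) (ha2 : a ≤ 1 / 2)
    (hφa : 1 / 2 ≤ stirlingRate a) (hb : 1 < b) (hφb : 1 / 2 ≤ stirlingRate b)
    (hx : exp 1 ≤ x) (hlo : liApprox a 0 x ≤ y) (hhi : y ≤ liApprox b 1 x) :
    |liStar x - y|
      ≤ exp 1 * (a⁻¹ + (1 + 2 * (1 - a)) + √b * (1 + 2 * (b - 1))) * √(x / log x) := by
  have hL : 1 ≤ log x := (le_log_iff_exp_le ((exp_pos 1).trans_le hx)).2 hx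
  have hx1 : 1 < x := (one_lt_exp_iff.2 one_pos).trans_le hx
  calc |liStar x - y|
      ≤ x / log x * ∑ k ∈ Icc ⌊a * log x⌋₊ ⌊b * log x⌋₊, (k ! : ℝ) / log x ^ k :=
        abs_liStar_sub_le_sum_Icc (by linarith) hb.le hx hlo hhi
    _ ≤ x / log x * (exp 1 * (a⁻¹ + (1 + 2 * (1 - a)) + √b * (1 + 2 * (b - 1)))
          * √(log x) * exp (-(log x / 2))) := by
        gcongr
        exact sum_Icc_floor_factorial_div_pow_le ha ha2 hφa hb hφb hL
    _ = _ := by rw [← div_log_mul_sqrt_log_mul_exp hx1]; ring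

lemma le_half_of_stirlingRate_eq_half {a : ℝ} (ha : 0 < a) (ha1 : a < 1)
    (h : stirlingRate a = 1 / 2) : a ≤ 1 / 2 := by
  have hlog := log_le_sub_one_of_pos ha
  unfold stirlingRate at h
  nlinarith

lemma inv_le_of_stirlingRate_eq_half {a : ℝ} (ha : 0 < a) (h : stirlingRate a = 1 / 2) :
    a⁻¹ ≤ 11 / 2 := by
  -- `log y ≤ e⁻² y + 1`, at `y = a⁻¹`
  have hlog := log_le_sub_one_of_pos (show 0 < a⁻¹ * exp (-2) by positivity)
  rw [log_mul (inv_pos.2 ha).ne' (exp_pos _).ne', log_inv, log_exp] at hlog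
  have hloga : log a = 1 - a⁻¹ / 2 := by
    unfold stirlingRate at h
    field_simp
    linarith
  have he2 : exp (-2) ≤ 0.1354 := by
    have h2 : exp (-2) * exp 1 ^ 2 = 1 := by rw [← exp_nat_mul, ← exp_add]; norm_num
    nlinarith [exp_one_gt_d9, exp_pos (-2)]
  nlinarith [inv_pos.2 ha]

lemma exp_one_mul_add_le_sqrt_mul_exp_mul_div {a b : ℝ} (ha : 0 < a) (ha1 : a < 1)
    (ha' : a⁻¹ ≤ 11 / 2) (hb : 1 < b) (hbe : b < exp 1) :
    exp 1 * (a⁻¹ + (1 + 2 * (1 - a)) + √b * (1 + 2 * (b - 1)))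
      ≤ √(8 * π / a) * exp (13 / 12) * (1 + a) / (1 - a) := by
  have he := exp_one_lt_d9
  have hsb : √b ≤ 1.6488 := by rw [sqrt_le_left (by norm_num)]; linarith
  have hsum : a⁻¹ + (1 + 2 * (1 - a)) + √b * (1 + 2 * (b - 1)) ≤ 15.82 := by
    nlinarith [sqrt_nonneg b]
  have hE : 2.94 ≤ exp (13 / 12) := by
    have h := add_one_le_exp (1 / 12)
    rw [show (13 / 12 : ℝ) = 1 + 1 / 12 by norm_num, exp_add]
    nlinarith [exp_one_gt_d9]
  have hroot : 15 * (1 - a) / (1 + a) ≤ √(8 * π / a) := by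
    rw [le_sqrt (by apply div_nonneg <;> linarith) (by positivity), div_pow,
      div_le_div_iff₀ (by positivity) ha]
    nlinarith [pi_gt_d6, sq_nonneg (a - 1 / 4), mul_pos ha (sub_pos.2 ha1)]
  calc exp 1 * (a⁻¹ + (1 + 2 * (1 - a)) + √b * (1 + 2 * (b - 1))) ≤ 15 * 2.94 := by
        nlinarith [exp_pos 1]
    _ ≤ 15 * exp (13 / 12) := by gcongr
    _ = 15 * (1 - a) / (1 + a) * exp (13 / 12) * (1 + a) / (1 - a) := by
        field_simp [(sub_pos.2 ha1).ne']
    _ ≤ √(8 * π / a) * exp (13 / 12) * (1 + a) / (1 - a) := by gcongr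

lemma one_le_sqrt_div_log {x : ℝ} (hx : exp 1 ≤ x) : 1 ≤ √(x / log x) := by
  have hx0 : 0 < x := (exp_pos 1).trans_le hx
  have hL : 1 ≤ log x := (le_log_iff_exp_le hx0).2 hx
  rw [one_le_sqrt, one_le_div (by linarith)]
  linarith [log_le_sub_one_of_pos hx0]

/-- Assume `|li(x) − li_*(x)| ≤ 1.265692883423` for all real `x ≥ e`
and `li₀(x) ≤ π(x) ≤ li₁(x)` for all real `x ≥ e`. Then
`|li(x) − π(x)| ≤ D̲·√(x/log x) + 1.265692883423` for all real `x ≥ e`, with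
`D̲ = √(8π/κ̲)·e^(13/12)·(1+κ̲)/(1−κ̲)`; in particular
`|li(x) − π(x)| = O(√(x/log x))`. Here `κ̲ ∈ (0,1)` and `κ̄ ∈ (1,e)` are the two
solutions of `κ(1−log κ) = 1/2`, `li₀(x) = li_{κ̲,0}(x)`, `li₁(x) = li_{κ̄,1}(x)`. -/
theorem abs_li_sub_primeCounting_le (κℓ κᵤ : ℝ) (hκℓ0 : 0 < κℓ) (hκℓ1 : κℓ < 1)
    (hκᵤ1 : 1 < κᵤ) (hκᵤe : κᵤ < Real.exp 1)
    (hsolℓ : κℓ * (1 - Real.log κℓ) = 1 / 2) (hsolᵤ : κᵤ * (1 - Real.log κᵤ) = 1 / 2)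
    (herr : ∀ x : ℝ, Real.exp 1 ≤ x → |li x - liStar x| ≤ 1.265692883423)
    (hconj : ∀ x : ℝ, Real.exp 1 ≤ x →
      liApprox κℓ 0 x ≤ (Nat.primeCounting ⌊x⌋₊ : ℝ) ∧
        (Nat.primeCounting ⌊x⌋₊ : ℝ) ≤ liApprox κᵤ 1 x) :
    (∀ x : ℝ, Real.exp 1 ≤ x →
        |li x - (Nat.primeCounting ⌊x⌋₊ : ℝ)| ≤
          Real.sqrt (8 * Real.pi / κℓ) * Real.exp (13 / 12) * (1 + κℓ) / (1 - κℓ)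
            * Real.sqrt (x / Real.log x) + 1.265692883423) ∧
      (fun x : ℝ => li x - (Nat.primeCounting ⌊x⌋₊ : ℝ)) =O[Filter.atTop]
        fun x : ℝ => Real.sqrt (x / Real.log x) := by
  set D := √(8 * π / κℓ) * exp (13 / 12) * (1 + κℓ) / (1 - κℓ)
  have hbound : ∀ x : ℝ, exp 1 ≤ x →
      |li x - (Nat.primeCounting ⌊x⌋₊ : ℝ)| ≤ D * √(x / log x) + 1.265692883423 := by
    intro x hx
    obtain ⟨hlo, hhi⟩ := hconj x hx
    have hstar := abs_liStar_sub_le_mul_sqrt hκℓ0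
      (le_half_of_stirlingRate_eq_half hκℓ0 hκℓ1 hsolℓ) hsolℓ.ge hκᵤ1 hsolᵤ.ge hx hlo hhi
    have hconst : _ ≤ D := exp_one_mul_add_le_sqrt_mul_exp_mul_div hκℓ0 hκℓ1
      (inv_le_of_stirlingRate_eq_half hκℓ0 hsolℓ) hκᵤ1 hκᵤe
    calc |li x - (Nat.primeCounting ⌊x⌋₊ : ℝ)|
        ≤ |li x - liStar x| + |liStar x - (Nat.primeCounting ⌊x⌋₊ : ℝ)| := abs_sub_le _ _ _
      _ ≤ 1.265692883423 + D * √(x / log x) :=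
        add_le_add (herr x hx) (hstar.trans (by gcongr))
      _ = _ := add_comm _ _
  refine ⟨hbound, Asymptotics.IsBigO.of_bound (D + 1.265692883423) ?_⟩
  filter_upwards [Filter.eventually_ge_atTop (exp 1)] with x hx
  rw [norm_eq_abs, norm_eq_abs, abs_of_nonneg (sqrt_nonneg _)]
  nlinarith [hbound x hx, one_le_sqrt_div_log hx]
end
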